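/- PSDP under policy realizability, admissibility, and concentrability (deterministic core of the theorem 'PSDP with realizability + admissibility + concentrability'): Let M be a finite-horizon layered MDP with horizon H and Π a policy class containing an optimal policy π⋆. Suppose every μ_h is admissible and μ satisfies concentrability with parameter C_conc ≥ 1 with respect to Π̄. Let ε_stat ≥ 0 and suppose per-layer selections π̂_h ∈ Π_h (h = H, …, 1) each satisfy the ε_stat-approximate policy optimization condition (CB_h) with rollout π̂_{h+1:H}. Then V^{π⋆} − V^{π̂_{1:H}} ≤ 2·H·(1 + C_conc)^{H}·ε_stat. -/

import Mathlib

open Finset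

/-- A finite-horizon layered MDP: a finite state space partitioned into layers
`1, …, H`, a finite action set, layer-respecting transitions, mean rewards in `[0,1]`,
and an initial distribution supported on layer `1`. -/
structure LayeredMDP (X A : Type) [Fintype X] [Fintype A] (H : ℕ) where
  layer : X → ℕ
  layer_lb : ∀ x, 1 ≤ layer x
  layer_ub : ∀ x, layer x ≤ H
  layer_surj : ∀ h, 1 ≤ h → h ≤ H → ∃ x, layer x = h
  P : X → A → X → ℝ
  P_nonneg : ∀ x a x', 0 ≤ P x a x'
  P_sum_one : ∀ x a, layer x < H → ∑ x', P x a x' = 1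
  P_supp : ∀ x a x', layer x < H → P x a x' ≠ 0 → layer x' = layer x + 1
  R : X → A → ℝ
  R_nonneg : ∀ x a, 0 ≤ R x a
  R_le_one : ∀ x a, R x a ≤ 1
  d1 : X → ℝ
  d1_nonneg : ∀ x, 0 ≤ d1 x
  d1_sum_one : ∑ x, d1 x = 1
  d1_supp : ∀ x, d1 x ≠ 0 → layer x = 1

namespace LayeredMDP

variable {X A : Type} [Fintype X] [Fintype A] {H : ℕ}

/-- `n`-step value function of policy `π` (backward recursion). -/
noncomputable def Vsteps (M : LayeredMDP X A H) (π : X → A) : ℕ → X → ℝ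
  | 0, _ => 0
  | n + 1, x => M.R x (π x) + ∑ x', M.P x (π x) x' * Vsteps M π n x'

/-- The value `V^π(x)` of policy `π` from state `x` (at layer `M.layer x`). -/
noncomputable def V (M : LayeredMDP X A H) (π : X → A) (x : X) : ℝ :=
  Vsteps M π (H + 1 - M.layer x) x

/-- `Q^π(x,a)`: for `x` in layer `H` this is `R(x,a)`, and for earlier layers it is
`R(x,a) + E_{x' ∼ P(·|x,a)} V^π(x')`.  Note that `Q^π(x,a)` depends on `π` only
through its actions at layers after `M.layer x`, so it also serves as the
`Q`-function of a partial policy on layers `M.layer x + 1, …, H`. -/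
noncomputable def Q (M : LayeredMDP X A H) (π : X → A) (x : X) (a : A) : ℝ :=
  M.R x a + ∑ x', M.P x a x' * Vsteps M π (H - M.layer x) x'

/-- The value `V^π = E_{x ∼ d1} V^π(x)` of a policy. -/
noncomputable def value (M : LayeredMDP X A H) (π : X → A) : ℝ :=
  ∑ x, M.d1 x * M.V π x

noncomputable def occAux (M : LayeredMDP X A H) (π : X → A) : ℕ → X → ℝ
  | 0 => M.d1
  | n + 1 => fun x' => ∑ x, occAux M π n x * M.P x (π x) x'

/-- Occupancy measure `d^π_h` at layer `h ∈ {1, …, H}`. -/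
noncomputable def occ (M : LayeredMDP X A H) (π : X → A) (h : ℕ) : X → ℝ :=
  occAux M π (h - 1)

/-- `πs` is an optimal policy: it maximizes the value from every state simultaneously. -/
def IsOptimal (M : LayeredMDP X A H) (πs : X → A) : Prop :=
  ∀ (x : X) (π : X → A), M.V π x ≤ M.V πs x

/-- `μ = (μ_1, …, μ_H)` is a family of reset distributions: each `μ_h` is a
probability distribution supported on layer `h`. -/
def IsReset (M : LayeredMDP X A H) (μ : ℕ → X → ℝ) : Prop :=
  (∀ h x, 0 ≤ μ h x) ∧ (∀ h, 1 ≤ h → h ≤ H → ∑ x, μ h x = 1) ∧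
    (∀ h x, 1 ≤ h → h ≤ H → μ h x ≠ 0 → M.layer x = h)

/-- `σ` belongs to `Π_h`, the set of restrictions of members of `Π` to layer `h`. -/
def memLayer (M : LayeredMDP X A H) (Pi : Finset (X → A)) (h : ℕ) (σ : X → A) : Prop :=
  ∃ π ∈ Pi, ∀ x, M.layer x = h → σ x = π x

/-- `π` belongs to `Π̄`, the layerwise product closure of `Π`. -/
def inClosure (M : LayeredMDP X A H) (Pi : Finset (X → A)) (π : X → A) : Prop :=
  ∀ h, 1 ≤ h → h ≤ H → M.memLayer Pi h π

/-- Average policy completeness error of the rollout `ρ` (standing for a partial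
policy `π̂_{h+1:H}`) with respect to a distribution `ν` on layer `h`:
`ε_PC(ρ, ν) = min_{π ∈ Π} E_{x∼ν}[max_a Q^ρ(x,a) − Q^ρ(x, π(x))]`. -/
noncomputable def epsPC [Nonempty A] (M : LayeredMDP X A H) (Pi : Finset (X → A))
    (hPi : Pi.Nonempty) (ν : X → ℝ) (ρ : X → A) : ℝ :=
  Pi.inf' hPi fun π =>
    ∑ x, ν x * ((univ.sup' univ_nonempty fun a => M.Q ρ x a) - M.Q ρ x (π x))

/-- The `ε_stat`-approximate policy optimization condition `(CB_h)`: the selection `σ`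
is an `ε_stat`-approximate maximizer of `π ↦ E_{x∼ν}[Q^ρ(x, π(x))]` over `Π`,
where `ρ` is the rollout (partial policy `π̂_{h+1:H}`). -/
def CB (M : LayeredMDP X A H) (Pi : Finset (X → A)) (ν : X → ℝ) (εstat : ℝ)
    (ρ σ : X → A) : Prop :=
  ∀ π ∈ Pi, (∑ x, ν x * M.Q ρ x (π x)) - εstat ≤ ∑ x, ν x * M.Q ρ x (σ x)

/-- `ν` is admissible at layer `h`: it is a mixture of occupancy measures `d^π_h`
of policies `π ∈ Π̄`. -/
def Admissible [DecidableEq X] (M : LayeredMDP X A H) (Pi : Finset (X → A)) (h : ℕ)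
    (ν : X → ℝ) : Prop :=
  ∃ w : (X → A) → ℝ, (∀ π, 0 ≤ w π) ∧ (∑ π, w π = 1) ∧
    (∀ π, w π ≠ 0 → M.inClosure Pi π) ∧ (∀ x, ν x = ∑ π, w π * M.occ π h x)

end LayeredMDP
namespace LayeredMDP

variable {X A : Type} [Fintype X] [Fintype A] {H : ℕ}

lemma vsteps_succ (M : LayeredMDP X A H) (π : X → A) (n : ℕ) (x : X) :
    M.Vsteps π (n + 1) x = M.R x (π x) + ∑ x', M.P x (π x) x' * M.Vsteps π n x' := rfl

lemma vsteps_zero (M : LayeredMDP X A H) (π : X → A) (x : X) :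
    M.Vsteps π 0 x = 0 := rfl

lemma vsteps_congr (M : LayeredMDP X A H) (π π' : X → A) :
    ∀ (n : ℕ) (x : X), n + M.layer x ≤ H + 1 →
      (∀ y, M.layer x ≤ M.layer y → π y = π' y) →
      M.Vsteps π n x = M.Vsteps π' n x := by
  intro n
  induction n with
  | zero => intro x _ _; rfl
  | succ n ih =>
    intro x hn hag
    rw [vsteps_succ, vsteps_succ, hag x le_rfl]
    congr 1
    apply Finset.sum_congr rfl
    intro x' _
    rcases Nat.eq_zero_or_pos n with h0 | hpos
    · subst h0; rfl
    by_cases hP : M.P x (π' x) x' = 0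
    · rw [hP]; ring
    have hlt : M.layer x < H := by have := M.layer_lb x; omega
    have hl' : M.layer x' = M.layer x + 1 := M.P_supp x (π' x) x' hlt hP
    rw [ih x' (by omega) (fun y hy => hag y (by omega))]

lemma V_eq_Q (M : LayeredMDP X A H) (π : X → A) (x : X) :
    M.V π x = M.Q π x (π x) := by
  have h : H + 1 - M.layer x = (H - M.layer x) + 1 := by
    have := M.layer_ub x; have := M.layer_lb x; omega
  rw [V, h, vsteps_succ]
  rfl

lemma Q_mono (M : LayeredMDP X A H) (π π' : X → A) (x : X) (a : A)
    (h : ∀ y, M.V π y ≤ M.V π' y) : M.Q π x a ≤ M.Q π' x a := by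
  unfold Q
  apply add_le_add le_rfl
  apply Finset.sum_le_sum
  intro x' _
  rcases (M.layer_ub x).lt_or_eq with hH | hH
  · by_cases hP : M.P x a x' = 0
    · rw [hP]; simp
    have hl' := M.P_supp x a x' hH hP
    have hV : ∀ σ : X → A, M.Vsteps σ (H - M.layer x) x' = M.V σ x' := by
      intro σ; rw [V, hl']
      congr 1
      have := M.layer_lb x; omega
    rw [hV, hV]
    exact mul_le_mul_of_nonneg_left (h x') (M.P_nonneg x a x')
  · rw [show H - M.layer x = 0 by omega, vsteps_zero, vsteps_zero]

lemma Q_le_V [DecidableEq X] (M : LayeredMDP X A H) (πs : X → A) (hopt : M.IsOptimal πs)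
    (x : X) (a : A) : M.Q πs x a ≤ M.V πs x := by
  have key : M.V (Function.update πs x a) x = M.Q πs x a := by
    rw [V]
    have h1 : H + 1 - M.layer x = (H - M.layer x) + 1 := by
      have := M.layer_ub x; have := M.layer_lb x; omega
    rw [h1, vsteps_succ, Function.update_self]
    unfold Q
    congr 1
    apply Finset.sum_congr rfl
    intro x' _
    rcases (M.layer_ub x).lt_or_eq with hH | hH
    · by_cases hP : M.P x a x' = 0
      · rw [hP]; ring
      have hl' := M.P_supp x a x' hH hP
      rw [vsteps_congr M _ πs (H - M.layer x) x' (by omega)]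
      intro y hy
      apply Function.update_of_ne
      intro hxy
      subst hxy
      omega
    · rw [show H - M.layer x = 0 by omega, vsteps_zero, vsteps_zero]
  calc M.Q πs x a = M.V (Function.update πs x a) x := key.symm
    _ ≤ M.V πs x := hopt x _

lemma occAux_zero (M : LayeredMDP X A H) (π : X → A) : M.occAux π 0 = M.d1 := rfl

lemma occAux_succ (M : LayeredMDP X A H) (π : X → A) (n : ℕ) (x' : X) :
    M.occAux π (n + 1) x' = ∑ x, M.occAux π n x * M.P x (π x) x' := rfl

lemma occAux_nonneg (M : LayeredMDP X A H) (π : X → A) :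
    ∀ n x, 0 ≤ M.occAux π n x := by
  intro n
  induction n with
  | zero => exact M.d1_nonneg
  | succ n ih =>
    intro x'
    rw [occAux_succ]
    exact Finset.sum_nonneg fun x _ => mul_nonneg (ih x) (M.P_nonneg x (π x) x')

lemma occAux_supp (M : LayeredMDP X A H) (π : X → A) :
    ∀ n, n + 1 ≤ H → ∀ x, M.occAux π n x ≠ 0 → M.layer x = n + 1 := by
  intro n
  induction n with
  | zero => exact fun _ => M.d1_supp
  | succ n ih =>
    intro hn x' hx'
    rw [occAux_succ] at hx'
    obtain ⟨x, -, hx⟩ := Finset.exists_ne_zero_of_sum_ne_zero hx'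
    have h1 : M.occAux π n x ≠ 0 := fun h => hx (by rw [h]; ring)
    have h2 : M.P x (π x) x' ≠ 0 := fun h => hx (by rw [h]; ring)
    have hl := ih (by omega) x h1
    have := M.P_supp x (π x) x' (by omega) h2
    omega

lemma occAux_congr (M : LayeredMDP X A H) (π π' : X → A) :
    ∀ n, n ≤ H → (∀ y, M.layer y ≤ n → π y = π' y) →
      ∀ x, M.occAux π n x = M.occAux π' n x := by
  intro n
  induction n with
  | zero => intro _ _ x; rfl
  | succ n ih =>
    intro hn hag x'
    rw [occAux_succ, occAux_succ]
    apply Finset.sum_congr rfl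
    intro x _
    by_cases h0 : M.occAux π n x = 0
    · rw [h0, ← ih (by omega) (fun y hy => hag y (by omega)) x, h0]
      ring
    · have hl := M.occAux_supp π n (by omega) x h0
      rw [ih (by omega) (fun y hy => hag y (by omega)) x, hag x (by omega)]


lemma swap_sum {c v : X → ℝ} {p : X → X → ℝ} :
    (∑ x, c x * ∑ x', p x x' * v x') = ∑ x', (∑ x, c x * p x x') * v x' := by
  simp_rw [Finset.mul_sum, Finset.sum_mul]
  rw [Finset.sum_comm]
  apply Finset.sum_congr rfl; intro x _
  apply Finset.sum_congr rfl; intro x' _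
  ring

lemma pdl (M : LayeredMDP X A H) (πs ρ : X → A) :
    M.value πs - M.value ρ =
      ∑ n ∈ Finset.range H, ∑ x, M.occAux πs n x * (M.Q ρ x (πs x) - M.Q ρ x (ρ x)) := by
  have key : ∀ m n, n + m = H →
      (∑ x, M.occAux πs n x * M.Vsteps πs (H - n) x)
        - (∑ x, M.occAux πs n x * M.Vsteps ρ (H - n) x)
      = ∑ k ∈ Finset.Ico n H, ∑ x, M.occAux πs k x * (M.Q ρ x (πs x) - M.Q ρ x (ρ x)) := by
    intro m
    induction m with
    | zero =>
      intro n hn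
      subst hn
      simp [Nat.sub_self, vsteps_zero]
    | succ m ih =>
      intro n hn
      have hnH : n < H := by omega
      have hHn : H - n = (H - (n + 1)) + 1 := by omega
      have ha : (∑ x, M.occAux πs n x * M.Vsteps πs (H - n) x)
          = (∑ x, M.occAux πs n x * M.R x (πs x))
            + ∑ x', M.occAux πs (n+1) x' * M.Vsteps πs (H - (n+1)) x' := by
        simp_rw [hHn, vsteps_succ, mul_add, Finset.sum_add_distrib]
        congr 1
        rw [swap_sum]
        apply Finset.sum_congr rfl
        intro x' _
        rw [occAux_succ]
      have hc : (∑ x, M.occAux πs n x * M.Q ρ x (πs x))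
          = (∑ x, M.occAux πs n x * M.R x (πs x))
            + ∑ x', M.occAux πs (n+1) x' * M.Vsteps ρ (H - (n+1)) x' := by
        have step : ∀ x, M.occAux πs n x * M.Q ρ x (πs x)
            = M.occAux πs n x * (M.R x (πs x)
              + ∑ x', M.P x (πs x) x' * M.Vsteps ρ (H - (n+1)) x') := by
          intro x
          by_cases h0 : M.occAux πs n x = 0
          · rw [h0]; ring
          · have hl := M.occAux_supp πs n (by omega) x h0
            unfold Q
            rw [hl]
        rw [Finset.sum_congr rfl (fun x _ => step x)]
        simp_rw [mul_add, Finset.sum_add_distrib]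
        congr 1
        rw [swap_sum]
        apply Finset.sum_congr rfl
        intro x' _
        rw [occAux_succ]
      have hb : (∑ x, M.occAux πs n x * M.Vsteps ρ (H - n) x)
          = ∑ x, M.occAux πs n x * M.Q ρ x (ρ x) := by
        apply Finset.sum_congr rfl
        intro x _
        by_cases h0 : M.occAux πs n x = 0
        · rw [h0]; ring
        · have hl := M.occAux_supp πs n (by omega) x h0
          rw [hHn, vsteps_succ]
          unfold Q
          rw [hl]
      have hF : (∑ x, M.occAux πs n x * (M.Q ρ x (πs x) - M.Q ρ x (ρ x)))
          = (∑ x, M.occAux πs n x * M.Q ρ x (πs x))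
            - ∑ x, M.occAux πs n x * M.Q ρ x (ρ x) := by
        simp_rw [mul_sub, Finset.sum_sub_distrib]
      have hIH := ih (n+1) (by omega)
      rw [Finset.sum_eq_sum_Ico_succ_bot hnH]
      rw [ha, hb]
      linarith [hF, hc, hIH]
  have h0 := key H 0 (by omega)
  have hval : ∀ σ : X → A, M.value σ = ∑ x, M.occAux πs 0 x * M.Vsteps σ (H - 0) x := by
    intro σ
    unfold value
    apply Finset.sum_congr rfl
    intro x _
    rw [occAux_zero]
    by_cases h0 : M.d1 x = 0
    · rw [h0]; ring
    · have hl := M.d1_supp x h0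
      rw [V, hl]
      norm_num
  rw [hval πs, hval ρ, h0, Finset.range_eq_Ico]
end LayeredMDP

open LayeredMDP in
/-- PSDP under policy realizability, admissibility, and concentrability
(deterministic core of the theorem "PSDP with realizability + admissibility +
concentrability"). -/
theorem psdp_realizability_admissible_concentrability
    {X A : Type} [Fintype X] [Fintype A] [DecidableEq X] [Nonempty A]
    {H : ℕ} (M : LayeredMDP X A H)
    (Pi : Finset (X → A)) (hPi : Pi.Nonempty)
    (μ : ℕ → X → ℝ) (hμ : M.IsReset μ)
    (πs : X → A) (hopt : M.IsOptimal πs) (hreal : πs ∈ Pi)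
    (Cconc : ℝ) (hCconc : 1 ≤ Cconc)
    (hconc : ∀ π, M.inClosure Pi π → ∀ h, 1 ≤ h → h ≤ H → ∀ x, M.layer x = h →
      M.occ π h x ≤ Cconc * μ h x)
    (hadm : ∀ h, 1 ≤ h → h ≤ H → M.Admissible Pi h (μ h))
    (εstat : ℝ) (hεstat : 0 ≤ εstat)
    (pick : ℕ → X → A)
    (hmem : ∀ h, 1 ≤ h → h ≤ H → M.memLayer Pi h (pick h))
    (hCB : ∀ h, 1 ≤ h → h ≤ H →
      M.CB Pi (μ h) εstat (fun x => pick (M.layer x) x) (pick h)) :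
    M.value πs - M.value (fun x => pick (M.layer x) x) ≤
      2 * (H : ℝ) * (1 + Cconc) ^ H * εstat := by
  obtain ⟨hμ0, hμ1, hμsupp⟩ := hμ
  have hH1 : 1 ≤ H := by
    by_contra hc
    push_neg at hc
    have h1 : ∃ x, M.d1 x ≠ 0 := by
      by_contra h
      push_neg at h
      have h2 := M.d1_sum_one
      rw [Finset.sum_eq_zero (fun x _ => h x)] at h2
      norm_num at h2
    obtain ⟨x, hx⟩ := h1
    have := M.d1_supp x hx
    have := M.layer_ub x
    omega
  set ρ : X → A := fun x => pick (M.layer x) x with hρdef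
  have hVle : ∀ y, M.V ρ y ≤ M.V πs y := fun y => hopt y ρ
  have hψ : ∀ y, (0:ℝ) ≤ M.V πs y - M.V ρ y := fun y => sub_nonneg.mpr (hVle y)
  have hπs_cl : M.inClosure Pi πs := fun h _ _ => ⟨πs, hreal, fun _ _ => rfl⟩
  have hC0 : (0:ℝ) ≤ Cconc := by linarith
  -- CB with ρ substituted for pick h on the support of μ h
  have hCB' : ∀ h, 1 ≤ h → h ≤ H → ∀ π ∈ Pi,
      (∑ x, μ h x * M.Q ρ x (π x)) - εstat ≤ ∑ x, μ h x * M.Q ρ x (ρ x) := by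
    intro h h1 h2 π hπ
    have hcb := hCB h h1 h2 π hπ
    have heq : (∑ x, μ h x * M.Q ρ x (pick h x)) = ∑ x, μ h x * M.Q ρ x (ρ x) := by
      apply Finset.sum_congr rfl
      intro x _
      by_cases h0 : μ h x = 0
      · rw [h0]; ring
      · have hl := hμsupp h x h1 h2 h0
        have : ρ x = pick h x := by rw [hρdef]; simp only; rw [hl]
        rw [this]
    rw [heq] at hcb
    exact hcb
  -- T h = 0 at the last layer
  have hTH : (∑ x, μ H x * (M.Q πs x (πs x) - M.Q ρ x (πs x))) = 0 := by
    apply Finset.sum_eq_zero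
    intro x _
    by_cases h0 : μ H x = 0
    · rw [h0]; ring
    · have hl := hμsupp H x hH1 le_rfl h0
      have hq : ∀ σ : X → A, M.Q σ x (πs x) = M.R x (πs x) := by
        intro σ
        unfold LayeredMDP.Q
        rw [hl, Nat.sub_self]
        simp [vsteps_zero]
      rw [hq πs, hq ρ]
      ring
  -- the key concentrability step: T h ≤ Cconc * δ (h+1) for h < H
  have hT : ∀ h, 1 ≤ h → h < H →
      (∑ x, μ h x * (M.Q πs x (πs x) - M.Q ρ x (πs x)))
        ≤ Cconc * ∑ x, μ (h+1) x * (M.V πs x - M.V ρ x) := by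
    intro h h1 hhH
    obtain ⟨g, rfl⟩ : ∃ g, h = g + 1 := ⟨h - 1, by omega⟩
    set h := g + 1 with hhdef
    obtain ⟨w, hw0, hw1, hwcl, hwμ⟩ := hadm h h1 (le_of_lt hhH)
    set π'' : (X → A) → (X → A) := fun π y => if M.layer y = h then πs y else π y with hπ''
    have step1 : (∑ x, μ h x * (M.Q πs x (πs x) - M.Q ρ x (πs x)))
        = ∑ x, μ h x * (∑ x', M.P x (πs x) x' * (M.V πs x' - M.V ρ x')) := by
      apply Finset.sum_congr rfl
      intro x _
      by_cases h0 : μ h x = 0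
      · rw [h0]; ring
      · have hl := hμsupp h x h1 (le_of_lt hhH) h0
        congr 1
        have key : ∀ σ : X → A,
            (∑ x', M.P x (πs x) x' * M.Vsteps σ (H - M.layer x) x')
              = ∑ x', M.P x (πs x) x' * M.V σ x' := by
          intro σ
          apply Finset.sum_congr rfl
          intro x' _
          by_cases hP : M.P x (πs x) x' = 0
          · rw [hP]; ring
          · have hl2 := M.P_supp x (πs x) x' (by omega) hP
            rw [V]
            congr 2
            omega
        unfold LayeredMDP.Q
        rw [key πs, key ρ]
        simp_rw [mul_sub, Finset.sum_sub_distrib]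
        ring
    have step2 : (∑ x, μ h x * (M.Q πs x (πs x) - M.Q ρ x (πs x)))
        = ∑ x', (∑ x, μ h x * M.P x (πs x) x') * (M.V πs x' - M.V ρ x') := by
      rw [step1, swap_sum]
    have hocc : ∀ (π : X → A) (x' : X), (∑ x, M.occAux π g x * M.P x (πs x) x')
        = M.occAux (π'' π) (g+1) x' := by
      intro π x'
      rw [occAux_succ]
      apply Finset.sum_congr rfl
      intro x _
      have hcongr : M.occAux (π'' π) g x = M.occAux π g x := by
        apply occAux_congr M _ _ g (by omega)
        intro y hy
        have : M.layer y ≠ h := by omega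
        simp [hπ'', this]
      rw [hcongr]
      by_cases h0 : M.occAux π g x = 0
      · rw [h0]; ring
      · have hl := M.occAux_supp π g (by omega) x h0
        have : π'' π x = πs x := by simp [hπ'', hl, hhdef]
        rw [this]
    have hκ : ∀ x', (∑ x, μ h x * M.P x (πs x) x') ≤ Cconc * μ (h+1) x' := by
      intro x'
      have hrw : (∑ x, μ h x * M.P x (πs x) x')
          = ∑ π : X → A, w π * M.occAux (π'' π) (g+1) x' := by
        simp_rw [hwμ, Finset.sum_mul]
        rw [Finset.sum_comm]
        apply Finset.sum_congr rfl
        intro π _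
        rw [← hocc π x', Finset.mul_sum]
        apply Finset.sum_congr rfl
        intro x _
        have : M.occ π h x = M.occAux π g x := by
          unfold LayeredMDP.occ
          rw [hhdef]
          norm_num
        rw [this]
        ring
      rw [hrw]
      have hbd : ∀ π : X → A, w π * M.occAux (π'' π) (g+1) x' ≤ w π * (Cconc * μ (h+1) x') := by
        intro π
        by_cases hwz : w π = 0
        · rw [hwz]; ring_nf; exact le_refl _
        · apply mul_le_mul_of_nonneg_left _ (hw0 π)
          have hcl : M.inClosure Pi (π'' π) := by
            intro k k1 k2
            by_cases hk : k = h
            · subst hk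
              refine ⟨πs, hreal, fun y hy => ?_⟩
              simp [hπ'', hy]
            · obtain ⟨σ, hσ, hag⟩ := hwcl π hwz k k1 k2
              refine ⟨σ, hσ, fun y hy => ?_⟩
              have : M.layer y ≠ h := by omega
              simp only [hπ'', if_neg this]
              exact hag y hy
          by_cases hl' : M.layer x' = h + 1
          · have := hconc (π'' π) hcl (h+1) (by omega) (by omega) x' hl'
            simpa [LayeredMDP.occ] using this
          · have hz : M.occAux (π'' π) (g+1) x' = 0 := by
              by_contra hne
              exact hl' (M.occAux_supp (π'' π) (g+1) (by omega) x' hne)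
            rw [hz]
            exact mul_nonneg hC0 (hμ0 (h+1) x')
      calc (∑ π : X → A, w π * M.occAux (π'' π) (g+1) x')
          ≤ ∑ π : X → A, w π * (Cconc * μ (h+1) x') := Finset.sum_le_sum fun π _ => hbd π
        _ = Cconc * μ (h+1) x' := by rw [← Finset.sum_mul, hw1, one_mul]
    rw [step2, Finset.mul_sum]
    apply Finset.sum_le_sum
    intro x' _
    rw [← mul_assoc]
    exact mul_le_mul_of_nonneg_right (hκ x') (hψ x')
  -- geometric sum identity
  have hgeomsum : ∀ m : ℕ, (∑ k ∈ Finset.range (m+2), Cconc ^ k)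
      = 1 + Cconc * ∑ k ∈ Finset.range (m+1), Cconc ^ k := by
    intro m
    rw [Finset.sum_range_succ' _ (m+1)]
    simp_rw [pow_succ]
    rw [← Finset.sum_mul]
    ring
  -- δ h ≤ T h + εstat
  have hD : ∀ h, 1 ≤ h → h ≤ H →
      (∑ x, μ h x * (M.V πs x - M.V ρ x))
        ≤ (∑ x, μ h x * (M.Q πs x (πs x) - M.Q ρ x (πs x))) + εstat := by
    intro h h1 h2
    have hcb := hCB' h h1 h2 πs hreal
    simp_rw [V_eq_Q, mul_sub, Finset.sum_sub_distrib]
    linarith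
  -- δ bound by geometric sums
  have hδ : ∀ m h, h + m = H → 1 ≤ h →
      (∑ x, μ h x * (M.V πs x - M.V ρ x)) ≤ εstat * ∑ k ∈ Finset.range (m+1), Cconc ^ k := by
    intro m
    induction m with
    | zero =>
      intro h hh h1
      have hhH : h = H := by omega
      subst hhH
      have hd := hD h hH1 le_rfl
      rw [hTH] at hd
      have hs : (∑ k ∈ Finset.range (0+1), Cconc ^ k) = 1 := by simp
      rw [hs]
      linarith
    | succ m ih =>
      intro h hh h1
      have hhH : h < H := by omega
      have hd := hD h h1 (le_of_lt hhH)
      have ht := hT h h1 hhH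
      have hi := ih (h+1) (by omega) (by omega)
      have hmul := mul_le_mul_of_nonneg_left hi hC0
      have hgid := hgeomsum m
      have hr : εstat * (∑ k ∈ Finset.range (m+2), Cconc ^ k)
          = Cconc * (εstat * ∑ k ∈ Finset.range (m+1), Cconc ^ k) + εstat := by
        rw [hgid]; ring
      rw [show m + 1 + 1 = m + 2 by omega, hr]
      linarith
  -- monotonicity of geometric partial sums
  have hGmono : ∀ m, m + 1 ≤ H →
      (∑ k ∈ Finset.range (m+1), Cconc ^ k) ≤ ∑ k ∈ Finset.range H, Cconc ^ k := by
    intro m hm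
    apply Finset.sum_le_sum_of_subset_of_nonneg (Finset.range_subset_range.mpr hm)
    intro k _ _
    exact pow_nonneg hC0 k
  -- εb h ≤ εstat * G
  have hEb : ∀ h, 1 ≤ h → h ≤ H →
      (∑ x, μ h x * ((Finset.univ.sup' Finset.univ_nonempty fun a => M.Q ρ x a) - M.Q ρ x (ρ x)))
        ≤ εstat * ∑ k ∈ Finset.range H, Cconc ^ k := by
    intro h h1 h2
    -- εb h ≤ T h + εstat
    have hE1 : (∑ x, μ h x * ((Finset.univ.sup' Finset.univ_nonempty fun a => M.Q ρ x a) - M.Q ρ x (ρ x)))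
        ≤ (∑ x, μ h x * (M.Q πs x (πs x) - M.Q ρ x (πs x))) + εstat := by
      have hsup : ∀ x : X, (Finset.univ.sup' Finset.univ_nonempty fun a => M.Q ρ x a)
          ≤ M.Q πs x (πs x) := by
        intro x
        apply Finset.sup'_le
        intro a _
        calc M.Q ρ x a ≤ M.Q πs x a := Q_mono M ρ πs x a hVle
          _ ≤ M.V πs x := Q_le_V M πs hopt x a
          _ = M.Q πs x (πs x) := V_eq_Q M πs x
      have hcb := hCB' h h1 h2 πs hreal
      have hstep : (∑ x, μ h x * ((Finset.univ.sup' Finset.univ_nonempty fun a => M.Q ρ x a) - M.Q ρ x (ρ x)))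
          ≤ ∑ x, μ h x * ((M.Q πs x (πs x) - M.Q ρ x (πs x)) + (M.Q ρ x (πs x) - M.Q ρ x (ρ x))) := by
        apply Finset.sum_le_sum
        intro x _
        apply mul_le_mul_of_nonneg_left _ (hμ0 h x)
        have := hsup x
        linarith
      have hsplit : (∑ x, μ h x * ((M.Q πs x (πs x) - M.Q ρ x (πs x)) + (M.Q ρ x (πs x) - M.Q ρ x (ρ x))))
          = (∑ x, μ h x * (M.Q πs x (πs x) - M.Q ρ x (πs x)))
            + ((∑ x, μ h x * M.Q ρ x (πs x)) - ∑ x, μ h x * M.Q ρ x (ρ x)) := by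
        simp_rw [mul_add, mul_sub, Finset.sum_add_distrib, Finset.sum_sub_distrib]
      linarith
    rcases eq_or_lt_of_le h2 with hEq | hlt
    · subst hEq
      rw [hTH] at hE1
      have hG1 : (1:ℝ) ≤ ∑ k ∈ Finset.range h, Cconc ^ k := by
        have h01 : (∑ k ∈ Finset.range 1, Cconc ^ k) = 1 := by simp
        rw [← h01]
        exact hGmono 0 h1
      nlinarith
    · have ht := hT h h1 hlt
      have hi := hδ (H - h - 1) (h+1) (by omega) (by omega)
      have hmul := mul_le_mul_of_nonneg_left hi hC0
      have hgid := hgeomsum (H - h - 1)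
      have h5 : εstat * (∑ k ∈ Finset.range (H - h - 1 + 2), Cconc ^ k)
          = εstat + Cconc * (εstat * ∑ k ∈ Finset.range (H - h - 1 + 1), Cconc ^ k) := by
        rw [hgid]; ring
      have h6 : εstat * (∑ k ∈ Finset.range (H - h - 1 + 2), Cconc ^ k)
          ≤ εstat * ∑ k ∈ Finset.range H, Cconc ^ k :=
        mul_le_mul_of_nonneg_left (hGmono (H - h - 1 + 1) (by omega)) hεstat
      linarith
  -- C * G ≤ (1+C)^H - 1
  have hgeomC : ∀ n : ℕ, Cconc * ∑ k ∈ Finset.range n, Cconc ^ k ≤ (1 + Cconc)^n - 1 := by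
    intro n
    induction n with
    | zero => simp
    | succ n ih =>
      rw [Finset.sum_range_succ, pow_succ]
      have hp : Cconc ^ n ≤ (1 + Cconc)^n := pow_le_pow_left₀ hC0 (by linarith) n
      have hp2 := mul_le_mul_of_nonneg_left hp hC0
      nlinarith [pow_nonneg (show (0:ℝ) ≤ 1 + Cconc by linarith) n]
  -- per-step bound on the PDL terms
  have hFb : ∀ n ∈ Finset.range H,
      (∑ x, M.occAux πs n x * (M.Q ρ x (πs x) - M.Q ρ x (ρ x)))
        ≤ Cconc * (εstat * ∑ k ∈ Finset.range H, Cconc ^ k) := by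
    intro n hn
    rw [Finset.mem_range] at hn
    have h1 : 1 ≤ n + 1 := by omega
    have h2 : n + 1 ≤ H := by omega
    have step1 : (∑ x, M.occAux πs n x * (M.Q ρ x (πs x) - M.Q ρ x (ρ x)))
        ≤ ∑ x, M.occAux πs n x *
            ((Finset.univ.sup' Finset.univ_nonempty fun a => M.Q ρ x a) - M.Q ρ x (ρ x)) := by
      apply Finset.sum_le_sum
      intro x _
      apply mul_le_mul_of_nonneg_left _ (M.occAux_nonneg πs n x)
      have : M.Q ρ x (πs x) ≤ Finset.univ.sup' Finset.univ_nonempty fun a => M.Q ρ x a :=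
        Finset.le_sup' _ (Finset.mem_univ (πs x))
      linarith
    have step2 : (∑ x, M.occAux πs n x *
            ((Finset.univ.sup' Finset.univ_nonempty fun a => M.Q ρ x a) - M.Q ρ x (ρ x)))
        ≤ ∑ x, (Cconc * μ (n+1) x) *
            ((Finset.univ.sup' Finset.univ_nonempty fun a => M.Q ρ x a) - M.Q ρ x (ρ x)) := by
      apply Finset.sum_le_sum
      intro x _
      have hgap : (0:ℝ) ≤ (Finset.univ.sup' Finset.univ_nonempty fun a => M.Q ρ x a) - M.Q ρ x (ρ x) := by
        have : M.Q ρ x (ρ x) ≤ Finset.univ.sup' Finset.univ_nonempty fun a => M.Q ρ x a :=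
          Finset.le_sup' _ (Finset.mem_univ (ρ x))
        linarith
      apply mul_le_mul_of_nonneg_right _ hgap
      by_cases hl : M.layer x = n + 1
      · have := hconc πs hπs_cl (n+1) h1 h2 x hl
        simpa [LayeredMDP.occ] using this
      · have hz : M.occAux πs n x = 0 := by
          by_contra hne
          exact hl (M.occAux_supp πs n h2 x hne)
        rw [hz]
        exact mul_nonneg hC0 (hμ0 (n+1) x)
    have step3 : (∑ x, (Cconc * μ (n+1) x) *
            ((Finset.univ.sup' Finset.univ_nonempty fun a => M.Q ρ x a) - M.Q ρ x (ρ x)))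
        = Cconc * ∑ x, μ (n+1) x *
            ((Finset.univ.sup' Finset.univ_nonempty fun a => M.Q ρ x a) - M.Q ρ x (ρ x)) := by
      rw [Finset.mul_sum]
      apply Finset.sum_congr rfl
      intro x _
      ring
    have step4 := mul_le_mul_of_nonneg_left (hEb (n+1) h1 h2) hC0
    linarith
  -- assemble
  have hmain := pdl M πs ρ
  have hsum : (∑ n ∈ Finset.range H, ∑ x, M.occAux πs n x * (M.Q ρ x (πs x) - M.Q ρ x (ρ x)))
      ≤ ∑ _n ∈ Finset.range H, Cconc * (εstat * ∑ k ∈ Finset.range H, Cconc ^ k) :=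
    Finset.sum_le_sum hFb
  rw [Finset.sum_const, Finset.card_range, nsmul_eq_mul] at hsum
  have hCG := hgeomC H
  have hp1 : (1:ℝ) ≤ (1 + Cconc)^H := one_le_pow₀ (by linarith : (1:ℝ) ≤ 1 + Cconc)
  have hCG2 : Cconc * (∑ k ∈ Finset.range H, Cconc ^ k) ≤ 2 * (1 + Cconc)^H := by linarith
  have hHε : (0:ℝ) ≤ (H:ℝ) * εstat := mul_nonneg (Nat.cast_nonneg H) hεstat
  have hfin := mul_le_mul_of_nonneg_left hCG2 hHε
  rw [hmain]
  calc (∑ n ∈ Finset.range H, ∑ x, M.occAux πs n x * (M.Q ρ x (πs x) - M.Q ρ x (ρ x)))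
      ≤ (H:ℝ) * (Cconc * (εstat * ∑ k ∈ Finset.range H, Cconc ^ k)) := hsum
    _ ≤ 2 * (H:ℝ) * (1 + Cconc)^H * εstat := by nlinarith
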